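/- arXiv:2002.06277 — 2 statements merged into one kernel-verified Lean document; each statement's English description precedes it below -/
import Mathlib

section
/- The Nikaido-Isoda error NI(μₓ,μᵧ) = sup_{νᵧ} L(μₓ,νᵧ) − inf_{νₓ} L(νₓ,μᵧ) is Lipschitz with constant Lip(ℓ) with respect to the distance W₁(μₓ,μₓ') + W₁(μᵧ,μᵧ') on P(X)×P(Y). -/
open MeasureTheory
open scoped NNReal

noncomputable def wassersteinDist {X : Type*} [MeasurableSpace X] [PseudoMetricSpace X]
    (p : ℝ) (μ ν : Measure X) : ℝ :=
  sInf { c : ℝ | ∃ π : Measure (X × X), IsProbabilityMeasure π ∧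
    π.map Prod.fst = μ ∧ π.map Prod.snd = ν ∧
    c = (∫ z, dist z.1 z.2 ^ p ∂π) ^ (1 / p) }

/-- The expected loss `L(μₓ,μᵧ) = ∬ ℓ dμₓ dμᵧ`. -/
noncomputable def expLoss {X Y : Type*} [MeasurableSpace X] [MeasurableSpace Y]
    (ℓ : X → Y → ℝ) (μx : Measure X) (μy : Measure Y) : ℝ :=
  ∫ x, ∫ y, ℓ x y ∂μy ∂μx

/-- The Nikaido-Isoda error. -/
noncomputable def NIerror {X Y : Type*} [MeasurableSpace X] [MeasurableSpace Y]
    (ℓ : X → Y → ℝ) (μx : Measure X) (μy : Measure Y) : ℝ :=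
  sSup { r : ℝ | ∃ νy : Measure Y, IsProbabilityMeasure νy ∧ r = expLoss ℓ μx νy } -
    sInf { r : ℝ | ∃ νx : Measure X, IsProbabilityMeasure νx ∧ r = expLoss ℓ νx μy }

section Aux

variable {Z : Type*} [MetricSpace Z] [CompactSpace Z] [MeasurableSpace Z] [BorelSpace Z]

lemma cont_integrable (f : Z → ℝ) (hf : Continuous f) (μ : Measure Z) [IsFiniteMeasure μ] :
    Integrable f μ :=
  hf.integrable_of_hasCompactSupport (HasCompactSupport.of_compactSpace f)

/-- Core "easy Kantorovich" inequality. -/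
lemma integral_sub_le_wasserstein (f : Z → ℝ) (K : ℝ≥0) (hf : LipschitzWith K f)
    (μ μ' : Measure Z) [IsProbabilityMeasure μ] [IsProbabilityMeasure μ'] :
    ∫ z, f z ∂μ - ∫ z, f z ∂μ' ≤ K * wassersteinDist 1 μ μ' := by
  set S := { c : ℝ | ∃ π : Measure (Z × Z), IsProbabilityMeasure π ∧
    π.map Prod.fst = μ ∧ π.map Prod.snd = μ' ∧
    c = (∫ z, dist z.1 z.2 ^ (1:ℝ) ∂π) ^ (1 / (1:ℝ)) } with hS
  have hne : S.Nonempty := by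
    refine ⟨_, μ.prod μ', inferInstance, ?_, ?_, rfl⟩
    · simp [Measure.map_fst_prod]
    · simp [Measure.map_snd_prod]
  have key : ∀ c ∈ S, ∫ z, f z ∂μ - ∫ z, f z ∂μ' ≤ (K : ℝ) * c := by
    rintro c ⟨π, hπ, hπ1, hπ2, rfl⟩
    haveI := hπ
    have hc : ((∫ z, dist z.1 z.2 ^ (1:ℝ) ∂π) ^ (1 / (1:ℝ)) : ℝ)
        = ∫ z : Z × Z, dist z.1 z.2 ∂π := by
      norm_num
    rw [hc]
    have h1 : ∫ z, f z ∂μ = ∫ z : Z × Z, f z.1 ∂π := by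
      rw [← hπ1, integral_map measurable_fst.aemeasurable
        hf.continuous.aestronglyMeasurable]
    have h2 : ∫ z, f z ∂μ' = ∫ z : Z × Z, f z.2 ∂π := by
      rw [← hπ2, integral_map measurable_snd.aemeasurable
        hf.continuous.aestronglyMeasurable]
    have hi1 : Integrable (fun z : Z × Z => f z.1) π :=
      cont_integrable _ (hf.continuous.comp continuous_fst) π
    have hi2 : Integrable (fun z : Z × Z => f z.2) π :=
      cont_integrable _ (hf.continuous.comp continuous_snd) π
    have hid : Integrable (fun z : Z × Z => dist z.1 z.2) π :=
      cont_integrable _ (continuous_fst.dist continuous_snd) π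
    rw [h1, h2, ← integral_sub hi1 hi2]
    calc ∫ z : Z × Z, (f z.1 - f z.2) ∂π
        ≤ ∫ z : Z × Z, (K : ℝ) * dist z.1 z.2 ∂π := by
          apply integral_mono (hi1.sub hi2) (hid.const_mul _)
          intro z
          exact le_trans (le_abs_self _)
            (by simpa [Real.dist_eq] using hf.dist_le_mul z.1 z.2)
      _ = (K : ℝ) * ∫ z : Z × Z, dist z.1 z.2 ∂π := by rw [integral_const_mul]
  rcases eq_or_lt_of_le (NNReal.coe_nonneg K) with hK | hK
  · obtain ⟨c, hc⟩ := hne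
    have := key c hc
    rw [← hK] at this ⊢
    simpa using this
  · rw [← div_le_iff₀' hK]
    refine le_csInf hne fun c hc => ?_
    rw [div_le_iff₀' hK]
    exact key c hc

lemma abs_integral_sub_le_wasserstein (f : Z → ℝ) (K : ℝ≥0) (hf : LipschitzWith K f)
    (μ μ' : Measure Z) [IsProbabilityMeasure μ] [IsProbabilityMeasure μ'] :
    |∫ z, f z ∂μ - ∫ z, f z ∂μ'| ≤ K * wassersteinDist 1 μ μ' := by
  rw [abs_sub_le_iff]
  constructor
  · exact integral_sub_le_wasserstein f K hf μ μ'
  · have := integral_sub_le_wasserstein (fun z => -f z) K hf.neg μ μ'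
    simp only [integral_neg] at this
    linarith

end Aux

/-- The Nikaido-Isoda error is `Lip(ℓ)`-Lipschitz for the distance
`W₁(μₓ,μₓ') + W₁(μᵧ,μᵧ')` on `P(X) × P(Y)`. -/
theorem stmt2 {X Y : Type*} [MetricSpace X] [CompactSpace X] [MeasurableSpace X] [BorelSpace X]
    [MetricSpace Y] [CompactSpace Y] [MeasurableSpace Y] [BorelSpace Y]
    (ℓ : X → Y → ℝ) (Kℓ : ℝ≥0)
    (hℓ : LipschitzWith Kℓ (fun p : X × Y => ℓ p.1 p.2))
    (μx μx' : Measure X) (μy μy' : Measure Y)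
    [IsProbabilityMeasure μx] [IsProbabilityMeasure μx']
    [IsProbabilityMeasure μy] [IsProbabilityMeasure μy'] :
    |NIerror ℓ μx μy - NIerror ℓ μx' μy'| ≤
      Kℓ * (wassersteinDist 1 μx μx' + wassersteinDist 1 μy μy') := by
  obtain ⟨M, hM⟩ := isBounded_iff_forall_norm_le.1
    (isCompact_range hℓ.continuous).isBounded
  have hM' : ∀ x y, ‖ℓ x y‖ ≤ M := fun x y => hM _ ⟨(x, y), rfl⟩
  have hcx : ∀ x, Continuous (fun y => ℓ x y) := fun x =>
    hℓ.continuous.comp (Continuous.prodMk_right x)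
  have hcy : ∀ y, Continuous (fun x => ℓ x y) := fun y =>
    hℓ.continuous.comp (continuous_id.prodMk continuous_const)
  -- boundedness of the expected loss
  have habs : ∀ (μ : Measure X) (ν : Measure Y), IsProbabilityMeasure μ →
      IsProbabilityMeasure ν → |expLoss ℓ μ ν| ≤ M := by
    intro μ ν hμ hν
    haveI := hμ; haveI := hν
    have h1 : ∀ x, ‖∫ y, ℓ x y ∂ν‖ ≤ M := by
      intro x
      have := norm_integral_le_of_norm_le_const (μ := ν) (C := M)
        (f := fun y => ℓ x y) (Filter.Eventually.of_forall fun y => hM' x y)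
      simpa using this
    have := norm_integral_le_of_norm_le_const (μ := μ) (C := M)
      (f := fun x => ∫ y, ℓ x y ∂ν) (Filter.Eventually.of_forall h1)
    simpa [expLoss, Real.norm_eq_abs] using this
  -- Lipschitz continuity of the partial integrals
  have lipx : ∀ (ν : Measure Y), IsProbabilityMeasure ν →
      LipschitzWith Kℓ (fun x => ∫ y, ℓ x y ∂ν) := by
    intro ν hν; haveI := hν
    apply LipschitzWith.of_dist_le_mul
    intro x x'
    have hdist : ∀ y, ‖ℓ x y - ℓ x' y‖ ≤ (Kℓ : ℝ) * dist x x' := by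
      intro y
      have := hℓ.dist_le_mul (x, y) (x', y)
      simpa [Prod.dist_eq, dist_self, Real.dist_eq,
        max_eq_left dist_nonneg] using this
    rw [Real.dist_eq, ← integral_sub (cont_integrable _ (hcx x) ν)
      (cont_integrable _ (hcx x') ν)]
    have := norm_integral_le_of_norm_le_const (μ := ν)
      (C := (Kℓ : ℝ) * dist x x')
      (f := fun y => ℓ x y - ℓ x' y) (Filter.Eventually.of_forall hdist)
    simpa [Real.norm_eq_abs] using this
  have lipy : ∀ (ν : Measure X), IsProbabilityMeasure ν →
      LipschitzWith Kℓ (fun y => ∫ x, ℓ x y ∂ν) := by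
    intro ν hν; haveI := hν
    apply LipschitzWith.of_dist_le_mul
    intro y y'
    have hdist : ∀ x, ‖ℓ x y - ℓ x y'‖ ≤ (Kℓ : ℝ) * dist y y' := by
      intro x
      have := hℓ.dist_le_mul (x, y) (x, y')
      simpa [Prod.dist_eq, dist_self, Real.dist_eq,
        max_eq_right dist_nonneg] using this
    rw [Real.dist_eq, ← integral_sub (cont_integrable _ (hcy y) ν)
      (cont_integrable _ (hcy y') ν)]
    have := norm_integral_le_of_norm_le_const (μ := ν)
      (C := (Kℓ : ℝ) * dist y y')
      (f := fun x => ℓ x y - ℓ x y') (Filter.Eventually.of_forall hdist)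
    simpa [Real.norm_eq_abs] using this
  -- Fubini
  have swap : ∀ (ν : Measure X) (μ : Measure Y), IsProbabilityMeasure ν →
      IsProbabilityMeasure μ → expLoss ℓ ν μ = ∫ y, ∫ x, ℓ x y ∂ν ∂μ := by
    intro ν μ hν hμ
    haveI := hν; haveI := hμ
    exact integral_integral_swap
      (cont_integrable (fun p : X × Y => ℓ p.1 p.2) hℓ.continuous (ν.prod μ))
  -- the two key estimates
  set Wx := wassersteinDist 1 μx μx' with hWx
  set Wy := wassersteinDist 1 μy μy' with hWy
  have key1 : ∀ (ν : Measure Y), IsProbabilityMeasure ν →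
      |expLoss ℓ μx ν - expLoss ℓ μx' ν| ≤ (Kℓ : ℝ) * Wx := by
    intro ν hν; haveI := hν
    exact abs_integral_sub_le_wasserstein _ Kℓ (lipx ν hν) μx μx'
  have key2 : ∀ (ν : Measure X), IsProbabilityMeasure ν →
      |expLoss ℓ ν μy - expLoss ℓ ν μy'| ≤ (Kℓ : ℝ) * Wy := by
    intro ν hν; haveI := hν
    rw [swap ν μy hν inferInstance, swap ν μy' hν inferInstance]
    exact abs_integral_sub_le_wasserstein _ Kℓ (lipy ν hν) μy μy'
  -- sets appearing in the NI error
  set A := { r : ℝ | ∃ νy : Measure Y, IsProbabilityMeasure νy ∧ r = expLoss ℓ μx νy } with hA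
  set A' := { r : ℝ | ∃ νy : Measure Y, IsProbabilityMeasure νy ∧ r = expLoss ℓ μx' νy } with hA'
  set B := { r : ℝ | ∃ νx : Measure X, IsProbabilityMeasure νx ∧ r = expLoss ℓ νx μy } with hB
  set B' := { r : ℝ | ∃ νx : Measure X, IsProbabilityMeasure νx ∧ r = expLoss ℓ νx μy' } with hB'
  have hAne : A.Nonempty := ⟨_, μy, inferInstance, rfl⟩
  have hA'ne : A'.Nonempty := ⟨_, μy, inferInstance, rfl⟩
  have hBne : B.Nonempty := ⟨_, μx, inferInstance, rfl⟩
  have hB'ne : B'.Nonempty := ⟨_, μx, inferInstance, rfl⟩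
  have hAbdd : BddAbove A := by
    refine ⟨M, ?_⟩; rintro r ⟨ν, hν, rfl⟩
    exact le_trans (le_abs_self _) (habs _ _ inferInstance hν)
  have hA'bdd : BddAbove A' := by
    refine ⟨M, ?_⟩; rintro r ⟨ν, hν, rfl⟩
    exact le_trans (le_abs_self _) (habs _ _ inferInstance hν)
  have hBbdd : BddBelow B := by
    refine ⟨-M, ?_⟩; rintro r ⟨ν, hν, rfl⟩
    exact neg_le_of_abs_le (habs _ _ hν inferInstance)
  have hB'bdd : BddBelow B' := by
    refine ⟨-M, ?_⟩; rintro r ⟨ν, hν, rfl⟩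
    exact neg_le_of_abs_le (habs _ _ hν inferInstance)
  -- sup estimates
  have hsup1 : sSup A ≤ sSup A' + (Kℓ : ℝ) * Wx := by
    refine csSup_le hAne ?_
    rintro r ⟨ν, hν, rfl⟩
    have h := abs_le.1 (key1 ν hν)
    have h2 : expLoss ℓ μx' ν ≤ sSup A' := le_csSup hA'bdd ⟨ν, hν, rfl⟩
    linarith
  have hsup2 : sSup A' ≤ sSup A + (Kℓ : ℝ) * Wx := by
    refine csSup_le hA'ne ?_
    rintro r ⟨ν, hν, rfl⟩
    have h := abs_le.1 (key1 ν hν)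
    have h2 : expLoss ℓ μx ν ≤ sSup A := le_csSup hAbdd ⟨ν, hν, rfl⟩
    linarith
  have hinf1 : sInf B ≤ sInf B' + (Kℓ : ℝ) * Wy := by
    rw [← sub_le_iff_le_add]
    refine le_csInf hB'ne ?_
    rintro r ⟨ν, hν, rfl⟩
    have h := abs_le.1 (key2 ν hν)
    have h2 : sInf B ≤ expLoss ℓ ν μy := csInf_le hBbdd ⟨ν, hν, rfl⟩
    linarith
  have hinf2 : sInf B' ≤ sInf B + (Kℓ : ℝ) * Wy := by
    rw [← sub_le_iff_le_add]
    refine le_csInf hBne ?_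
    rintro r ⟨ν, hν, rfl⟩
    have h := abs_le.1 (key2 ν hν)
    have h2 : sInf B' ≤ expLoss ℓ ν μy' := csInf_le hB'bdd ⟨ν, hν, rfl⟩
    linarith
  have hmul : (Kℓ : ℝ) * (Wx + Wy) = (Kℓ : ℝ) * Wx + (Kℓ : ℝ) * Wy := mul_add _ _ _
  have hNI : NIerror ℓ μx μy = sSup A - sInf B := rfl
  have hNI' : NIerror ℓ μx' μy' = sSup A' - sInf B' := rfl
  rw [hNI, hNI', abs_le]
  constructor <;> linarith
end

section
/- If μₓ₁, μᵧ₁ and μₓ₂, μᵧ₂ are two solutions of the entropic fixed point system ρₓ(x) = Zₓ⁻¹ exp(−β∫ℓ(x,y)dμᵧ(y)), ρᵧ(y) = Zᵧ⁻¹ exp(β∫ℓ(x,y)dμₓ(x)), then combining the first-order optimality conditions yields that β⁻¹(H(μₓ₂‖μₓ₁) + H(μₓ₁‖μₓ₂) + H(μᵧ₂‖μᵧ₁) + H(μᵧ₁‖μᵧ₂)) = 0, hence μₓ₁ = μₓ₂ and μᵧ₁ = μᵧ₂ (the fixed point is unique). -/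
open MeasureTheory

/-- Real-valued relative entropy `H(μ‖ν) = ∫ log (dμ/dν) dμ`. -/
noncomputable def relEntropyR {X : Type*} [MeasurableSpace X] (μ ν : Measure X) : ℝ :=
  ∫ x, Real.log ((μ.rnDeriv ν x).toReal) ∂μ

/-!
A Gibbs measure `μ = Z⁻¹ exp V · m` has log-likelihood ratio `V₂ - V₁ + log Z₁ - log Z₂` with
respect to another one, so `H(μ₂‖μ₁) + H(μ₁‖μ₂) = ∫ (V₂ - V₁) d(μ₂ - μ₁)`. For the fixed-point
system the potentials are `-β ∫ ℓ dμᵧ` and `β ∫ ℓ dμₓ`, so by Fubini the bilinear terms produced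
on the `X` side and on the `Y` side cancel. The four relative entropies are nonnegative by Gibbs'
inequality, hence all vanish, and a vanishing relative entropy forces equality.
-/

open InformationTheory

section RelEntropy

variable {α : Type*} [MeasurableSpace α] {μ ν : Measure α}

lemma relEntropyR_eq_integral_llr : relEntropyR μ ν = ∫ x, llr μ ν x ∂μ := rfl

lemma relEntropyR_eq_toReal_klDiv [IsProbabilityMeasure μ] [IsProbabilityMeasure ν]
    (h : μ ≪ ν) : relEntropyR μ ν = (klDiv μ ν).toReal :=
  (toReal_klDiv_of_measure_eq h (by simp)).symm

lemma relEntropyR_nonneg [IsProbabilityMeasure μ] [IsProbabilityMeasure ν] (h : μ ≪ ν) :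
    0 ≤ relEntropyR μ ν :=
  relEntropyR_eq_toReal_klDiv h ▸ ENNReal.toReal_nonneg

lemma eq_of_relEntropyR_eq_zero [IsProbabilityMeasure μ] [IsProbabilityMeasure ν] (h : μ ≪ ν)
    (hint : Integrable (llr μ ν) μ) (h0 : relEntropyR μ ν = 0) : μ = ν := by
  rw [relEntropyR_eq_toReal_klDiv h, ENNReal.toReal_eq_zero_iff] at h0
  exact klDiv_eq_zero_iff.mp (h0.resolve_right (klDiv_ne_top h hint))

end RelEntropy

section Density

variable {α : Type*} [MeasurableSpace α] {m : Measure α} {ρ₁ ρ₂ : α → ℝ}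

lemma withDensity_ofReal_eq_withDensity_div (hρ₁ : Measurable ρ₁) (hρ₂ : Measurable ρ₂)
    (hpos₁ : ∀ x, 0 < ρ₁ x) :
    m.withDensity (fun x => ENNReal.ofReal (ρ₂ x)) =
      (m.withDensity fun x => ENNReal.ofReal (ρ₁ x)).withDensity
        fun x => ENNReal.ofReal (ρ₂ x / ρ₁ x) := by
  have hρ : Measurable fun x => ρ₂ x / ρ₁ x := hρ₂.div hρ₁
  rw [← withDensity_mul _ hρ₁.ennreal_ofReal hρ.ennreal_ofReal]
  congr 1 with x
  rw [Pi.mul_apply, ← ENNReal.ofReal_mul (hpos₁ x).le, mul_div_cancel₀ _ (hpos₁ x).ne']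

lemma llr_withDensity_ofReal_ae_eq (hρ₁ : Measurable ρ₁) (hρ₂ : Measurable ρ₂)
    (hpos₁ : ∀ x, 0 < ρ₁ x) (hpos₂ : ∀ x, 0 < ρ₂ x)
    [SigmaFinite (m.withDensity fun x => ENNReal.ofReal (ρ₁ x))] :
    llr (m.withDensity fun x => ENNReal.ofReal (ρ₂ x))
        (m.withDensity fun x => ENNReal.ofReal (ρ₁ x))
      =ᵐ[m.withDensity fun x => ENNReal.ofReal (ρ₂ x)]
        fun x => Real.log (ρ₂ x) - Real.log (ρ₁ x) := by
  have hρ : Measurable fun x => ρ₂ x / ρ₁ x := hρ₂.div hρ₁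
  rw [withDensity_ofReal_eq_withDensity_div hρ₁ hρ₂ hpos₁]
  refine (withDensity_absolutelyContinuous _ _).ae_le ?_
  filter_upwards [Measure.rnDeriv_withDensity _ hρ.ennreal_ofReal] with x hx
  rw [llr, hx, ENNReal.toReal_ofReal (div_pos (hpos₂ x) (hpos₁ x)).le,
    Real.log_div (hpos₂ x).ne' (hpos₁ x).ne']

end Density

lemma log_inv_mul_exp {Z : ℝ} (hZ : 0 < Z) (v : ℝ) :
    Real.log (Z⁻¹ * Real.exp v) = v - Real.log Z := by
  rw [Real.log_mul (inv_ne_zero hZ.ne') (Real.exp_ne_zero _), Real.log_inv, Real.log_exp]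
  ring

section Gibbs

variable {α : Type*} [MeasurableSpace α]

def IsGibbs (m : Measure α) (V : α → ℝ) (Z : ℝ) (μ : Measure α) : Prop :=
  μ = m.withDensity fun x => ENNReal.ofReal (Z⁻¹ * Real.exp (V x))

namespace IsGibbs

variable {m : Measure α} {V₁ V₂ : α → ℝ} {Z₁ Z₂ : ℝ} {μ₁ μ₂ : Measure α}

lemma absolutelyContinuous (h₁ : IsGibbs m V₁ Z₁ μ₁) (h₂ : IsGibbs m V₂ Z₂ μ₂)
    (hV₁ : Measurable V₁) (hZ₁ : 0 < Z₁) : μ₂ ≪ μ₁ := by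
  rw [h₁, h₂]
  refine (withDensity_absolutelyContinuous m _).trans
    (withDensity_absolutelyContinuous' (by fun_prop) (ae_of_all _ fun x => ?_))
  positivity

lemma llr_ae_eq (h₁ : IsGibbs m V₁ Z₁ μ₁) (h₂ : IsGibbs m V₂ Z₂ μ₂)
    (hV₁ : Measurable V₁) (hV₂ : Measurable V₂) (hZ₁ : 0 < Z₁) (hZ₂ : 0 < Z₂) [SigmaFinite μ₁] :
    llr μ₂ μ₁ =ᵐ[μ₂] fun x => V₂ x - V₁ x + (Real.log Z₁ - Real.log Z₂) := by
  unfold IsGibbs at h₁ h₂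
  subst h₁ h₂
  filter_upwards [llr_withDensity_ofReal_ae_eq (ρ₁ := fun x => Z₁⁻¹ * Real.exp (V₁ x))
    (ρ₂ := fun x => Z₂⁻¹ * Real.exp (V₂ x)) (by fun_prop) (by fun_prop)
    (fun x => by positivity) (fun x => by positivity)] with x hx
  rw [hx, log_inv_mul_exp hZ₂, log_inv_mul_exp hZ₁]
  ring

lemma integrable_llr (h₁ : IsGibbs m V₁ Z₁ μ₁) (h₂ : IsGibbs m V₂ Z₂ μ₂)
    (hV₁ : Measurable V₁) (hV₂ : Measurable V₂) (hZ₁ : 0 < Z₁) (hZ₂ : 0 < Z₂) [SigmaFinite μ₁]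
    [IsFiniteMeasure μ₂] (hint₁ : Integrable V₁ μ₂) (hint₂ : Integrable V₂ μ₂) :
    Integrable (llr μ₂ μ₁) μ₂ :=
  ((hint₂.sub hint₁).add (integrable_const _)).congr (llr_ae_eq h₁ h₂ hV₁ hV₂ hZ₁ hZ₂).symm

lemma relEntropyR_eq (h₁ : IsGibbs m V₁ Z₁ μ₁) (h₂ : IsGibbs m V₂ Z₂ μ₂)
    (hV₁ : Measurable V₁) (hV₂ : Measurable V₂) (hZ₁ : 0 < Z₁) (hZ₂ : 0 < Z₂) [SigmaFinite μ₁]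
    [IsProbabilityMeasure μ₂] (hint₁ : Integrable V₁ μ₂) (hint₂ : Integrable V₂ μ₂) :
    relEntropyR μ₂ μ₁ =
      ∫ x, V₂ x ∂μ₂ - ∫ x, V₁ x ∂μ₂ + (Real.log Z₁ - Real.log Z₂) := by
  rw [relEntropyR_eq_integral_llr, integral_congr_ae (llr_ae_eq h₁ h₂ hV₁ hV₂ hZ₁ hZ₂),
    integral_add (hint₂.sub' hint₁) (integrable_const _), integral_sub hint₂ hint₁,
    integral_const, probReal_univ, one_smul]

lemma eq_of_relEntropyR_eq_zero (h₁ : IsGibbs m V₁ Z₁ μ₁) (h₂ : IsGibbs m V₂ Z₂ μ₂)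
    (hV₁ : Measurable V₁) (hV₂ : Measurable V₂) (hZ₁ : 0 < Z₁) (hZ₂ : 0 < Z₂)
    [IsProbabilityMeasure μ₁] [IsProbabilityMeasure μ₂]
    (hint₁ : Integrable V₁ μ₂) (hint₂ : Integrable V₂ μ₂) (h0 : relEntropyR μ₂ μ₁ = 0) :
    μ₂ = μ₁ :=
  _root_.eq_of_relEntropyR_eq_zero (h₁.absolutelyContinuous h₂ hV₁ hZ₁)
    (h₁.integrable_llr h₂ hV₁ hV₂ hZ₁ hZ₂ hint₁ hint₂) h0

end IsGibbs

end Gibbs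

section BoundedKernel

variable {X Y : Type*} [MeasurableSpace X] [MeasurableSpace Y] {ℓ : X → Y → ℝ} {M : ℝ}
  {μ : Measure X} {ν : Measure Y} [IsFiniteMeasure μ] [IsFiniteMeasure ν]

lemma integrable_integral_right_of_bounded (hℓ : StronglyMeasurable (Function.uncurry ℓ))
    (hM : ∀ x y, ‖ℓ x y‖ ≤ M) : Integrable (fun x => ∫ y, ℓ x y ∂ν) μ :=
  .of_bound hℓ.integral_prod_right'.aestronglyMeasurable (M * ν.real Set.univ)
    (ae_of_all _ fun x => norm_integral_le_of_norm_le_const (ae_of_all _ (hM x)))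

lemma integrable_integral_left_of_bounded (hℓ : StronglyMeasurable (Function.uncurry ℓ))
    (hM : ∀ x y, ‖ℓ x y‖ ≤ M) : Integrable (fun y => ∫ x, ℓ x y ∂μ) ν :=
  .of_bound hℓ.integral_prod_left'.aestronglyMeasurable (M * μ.real Set.univ)
    (ae_of_all _ fun y => norm_integral_le_of_norm_le_const (ae_of_all _ fun x => hM x y))

lemma integral_integral_swap_of_bounded (hℓ : StronglyMeasurable (Function.uncurry ℓ))
    (hM : ∀ x y, ‖ℓ x y‖ ≤ M) : ∫ y, ∫ x, ℓ x y ∂μ ∂ν = ∫ x, ∫ y, ℓ x y ∂ν ∂μ :=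
  (integral_integral_swap
    (.of_bound hℓ.aestronglyMeasurable M (ae_of_all _ fun p => hM p.1 p.2))).symm

end BoundedKernel

theorem stmt9_general {X Y : Type*} [MetricSpace X] [CompactSpace X] [MeasurableSpace X] [BorelSpace X]
    [MetricSpace Y] [CompactSpace Y] [MeasurableSpace Y] [BorelSpace Y]
    (mX : Measure X) (mY : Measure Y)
    (ℓ : X → Y → ℝ) (hℓ : Continuous fun p : X × Y => ℓ p.1 p.2)
    (β : ℝ)
    (μx₁ μx₂ : Measure X) (μy₁ μy₂ : Measure Y)
    [IsProbabilityMeasure μx₁] [IsProbabilityMeasure μx₂]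
    [IsProbabilityMeasure μy₁] [IsProbabilityMeasure μy₂]
    (Zx₁ Zy₁ Zx₂ Zy₂ : ℝ)
    (hZx₁ : 0 < Zx₁) (hZy₁ : 0 < Zy₁) (hZx₂ : 0 < Zx₂) (hZy₂ : 0 < Zy₂)
    (h₁x : μx₁ = mX.withDensity fun x =>
      ENNReal.ofReal (Zx₁⁻¹ * Real.exp (-(β * ∫ y, ℓ x y ∂μy₁))))
    (h₁y : μy₁ = mY.withDensity fun y =>
      ENNReal.ofReal (Zy₁⁻¹ * Real.exp (β * ∫ x, ℓ x y ∂μx₁)))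
    (h₂x : μx₂ = mX.withDensity fun x =>
      ENNReal.ofReal (Zx₂⁻¹ * Real.exp (-(β * ∫ y, ℓ x y ∂μy₂))))
    (h₂y : μy₂ = mY.withDensity fun y =>
      ENNReal.ofReal (Zy₂⁻¹ * Real.exp (β * ∫ x, ℓ x y ∂μx₂))) :
    β⁻¹ * (relEntropyR μx₂ μx₁ + relEntropyR μx₁ μx₂ +
        relEntropyR μy₂ μy₁ + relEntropyR μy₁ μy₂) = 0 ∧
      μx₁ = μx₂ ∧ μy₁ = μy₂ := by
  obtain ⟨M, hM⟩ := isCompact_univ.exists_bound_of_continuousOn hℓ.continuousOn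
  replace hM : ∀ x y, ‖ℓ x y‖ ≤ M := fun x y => hM (x, y) trivial
  have hℓm : StronglyMeasurable (Function.uncurry ℓ) := hℓ.stronglyMeasurable
  have hVx (ν : Measure Y) [IsFiniteMeasure ν] : Measurable fun x => -(β * ∫ y, ℓ x y ∂ν) :=
    (hℓm.integral_prod_right'.measurable.const_mul β).neg
  have hVy (μ : Measure X) [IsFiniteMeasure μ] : Measurable fun y => β * ∫ x, ℓ x y ∂μ :=
    hℓm.integral_prod_left'.measurable.const_mul β
  have hIx (ν : Measure Y) (μ : Measure X) [IsFiniteMeasure ν] [IsFiniteMeasure μ] :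
      Integrable (fun x => -(β * ∫ y, ℓ x y ∂ν)) μ :=
    ((integrable_integral_right_of_bounded hℓm hM).const_mul β).neg
  have hIy (μ : Measure X) (ν : Measure Y) [IsFiniteMeasure μ] [IsFiniteMeasure ν] :
      Integrable (fun y => β * ∫ x, ℓ x y ∂μ) ν :=
    (integrable_integral_left_of_bounded hℓm hM).const_mul β
  have hsum : relEntropyR μx₂ μx₁ + relEntropyR μx₁ μx₂ +
      relEntropyR μy₂ μy₁ + relEntropyR μy₁ μy₂ = 0 := by
    rw [IsGibbs.relEntropyR_eq h₁x h₂x (hVx _) (hVx _) hZx₁ hZx₂ (hIx _ _) (hIx _ _),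
      IsGibbs.relEntropyR_eq h₂x h₁x (hVx _) (hVx _) hZx₂ hZx₁ (hIx _ _) (hIx _ _),
      IsGibbs.relEntropyR_eq h₁y h₂y (hVy _) (hVy _) hZy₁ hZy₂ (hIy _ _) (hIy _ _),
      IsGibbs.relEntropyR_eq h₂y h₁y (hVy _) (hVy _) hZy₂ hZy₁ (hIy _ _) (hIy _ _)]
    simp only [integral_neg, integral_const_mul, integral_integral_swap_of_bounded hℓm hM]
    ring
  have hx₂₁ := relEntropyR_nonneg (IsGibbs.absolutelyContinuous h₁x h₂x (hVx _) hZx₁)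
  have hx₁₂ := relEntropyR_nonneg (IsGibbs.absolutelyContinuous h₂x h₁x (hVx _) hZx₂)
  have hy₂₁ := relEntropyR_nonneg (IsGibbs.absolutelyContinuous h₁y h₂y (hVy _) hZy₁)
  have hy₁₂ := relEntropyR_nonneg (IsGibbs.absolutelyContinuous h₂y h₁y (hVy _) hZy₂)
  exact ⟨by rw [hsum, mul_zero],
    (IsGibbs.eq_of_relEntropyR_eq_zero h₁x h₂x (hVx _) (hVx _) hZx₁ hZx₂ (hIx _ _) (hIx _ _)
      (by linarith)).symm,
    (IsGibbs.eq_of_relEntropyR_eq_zero h₁y h₂y (hVy _) (hVy _) hZy₁ hZy₂ (hIy _ _) (hIy _ _)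
      (by linarith)).symm⟩

/-- Uniqueness of the entropic fixed point: two solutions of the system
`ρₓ = Zₓ⁻¹ exp(−β∫ℓ dμᵧ)`, `ρᵧ = Zᵧ⁻¹ exp(β∫ℓ dμₓ)` have vanishing symmetrized relative
entropy and hence coincide. -/
theorem stmt9 {X Y : Type*} [MetricSpace X] [CompactSpace X] [MeasurableSpace X] [BorelSpace X]
    [MetricSpace Y] [CompactSpace Y] [MeasurableSpace Y] [BorelSpace Y]
    (mX : Measure X) (mY : Measure Y)
    (ℓ : X → Y → ℝ) (hℓ : Continuous fun p : X × Y => ℓ p.1 p.2)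
    (β : ℝ) (hβ : 0 < β)
    (μx₁ μx₂ : Measure X) (μy₁ μy₂ : Measure Y)
    [IsProbabilityMeasure μx₁] [IsProbabilityMeasure μx₂]
    [IsProbabilityMeasure μy₁] [IsProbabilityMeasure μy₂]
    (Zx₁ Zy₁ Zx₂ Zy₂ : ℝ)
    (hZx₁ : 0 < Zx₁) (hZy₁ : 0 < Zy₁) (hZx₂ : 0 < Zx₂) (hZy₂ : 0 < Zy₂)
    (h₁x : μx₁ = mX.withDensity fun x =>
      ENNReal.ofReal (Zx₁⁻¹ * Real.exp (-(β * ∫ y, ℓ x y ∂μy₁))))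
    (h₁y : μy₁ = mY.withDensity fun y =>
      ENNReal.ofReal (Zy₁⁻¹ * Real.exp (β * ∫ x, ℓ x y ∂μx₁)))
    (h₂x : μx₂ = mX.withDensity fun x =>
      ENNReal.ofReal (Zx₂⁻¹ * Real.exp (-(β * ∫ y, ℓ x y ∂μy₂))))
    (h₂y : μy₂ = mY.withDensity fun y =>
      ENNReal.ofReal (Zy₂⁻¹ * Real.exp (β * ∫ x, ℓ x y ∂μx₂))) :
    β⁻¹ * (relEntropyR μx₂ μx₁ + relEntropyR μx₁ μx₂ +
        relEntropyR μy₂ μy₁ + relEntropyR μy₁ μy₂) = 0 ∧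
      μx₁ = μx₂ ∧ μy₁ = μy₂ :=
  stmt9_general mX mY ℓ hℓ β μx₁ μx₂ μy₁ μy₂ Zx₁ Zy₁ Zx₂ Zy₂ hZx₁ hZy₁ hZx₂ hZy₂ h₁x h₁y h₂x h₂y
end
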